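/- arXiv:1106.5342 — 5 statements merged into one kernel-verified Lean document; each statement's English description precedes it below -/
import Mathlib

section
/- In the free algebra generated by elements φ_1,...,φ_n, φ_1*,...,φ_n* subject to the phase algebra relations, setting a_j = φ_{j+1}* φ_j for j = 1,...,n-1, the elements a_j satisfy the local plactic relations: a_i a_j = a_j a_i whenever |i - j| ≠ 1, and a_{i+1} a_i² = a_i a_{i+1} a_i and a_{i+1}² a_i = a_{i+1} a_i a_{i+1} for 1 ≤ i ≤ n-2. -/
/-- In any algebra with elements `φ_1,…,φ_{n+1}`, `φ_1*,…,φ_{n+1}*`, `N_1,…,N_{n+1}`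
satisfying the phase algebra relations, the elements `a_j = φ_{j+1}* φ_j`
(j = 1,…,n) satisfy the local plactic relations: `a_i a_j = a_j a_i` for `|i-j| ≠ 1`,
and `a_{i+1} a_i² = a_i a_{i+1} a_i`, `a_{i+1}² a_i = a_{i+1} a_i a_{i+1}`.
(Since the local finite plactic algebra is the free algebra on these generators modulo
these relations, this expresses that `a_j ↦ φ_{j+1}* φ_j` defines an algebra
homomorphism from it into the phase algebra.) -/
theorem phase_algebra_plactic_relations {A : Type*} [Ring A] (n : ℕ)
    (φ φs N : Fin (n + 1) → A)
    (hφφ : ∀ i j, φ i * φ j = φ j * φ i)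
    (hφsφs : ∀ i j, φs i * φs j = φs j * φs i)
    (hNN : ∀ i j, N i * N j = N j * N i)
    (hNφ : ∀ i j, N i * φ j - φ j * N i = -(if i = j then φ i else 0))
    (hNφs : ∀ i j, N i * φs j - φs j * N i = (if i = j then φs i else 0))
    (hφφs_eq : ∀ i, φ i * φs i = 1)
    (hφφs_ne : ∀ i j, i ≠ j → φ i * φs j = φs j * φ i)
    (hNproj : ∀ i, N i * (1 - φs i * φ i) = 0 ∧ (1 - φs i * φ i) * N i = 0) :
    letI a : Fin n → A := fun t => φs t.succ * φ t.castSucc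
    (∀ i j : Fin n, (i : ℕ) + 1 ≠ (j : ℕ) → (j : ℕ) + 1 ≠ (i : ℕ) →
        a i * a j = a j * a i) ∧
    (∀ (i : Fin n) (h : (i : ℕ) + 1 < n),
        a ⟨(i : ℕ) + 1, h⟩ * (a i * a i) = a i * (a ⟨(i : ℕ) + 1, h⟩ * a i) ∧
        (a ⟨(i : ℕ) + 1, h⟩ * a ⟨(i : ℕ) + 1, h⟩) * a i =
          a ⟨(i : ℕ) + 1, h⟩ * (a i * a ⟨(i : ℕ) + 1, h⟩)) := by
  dsimp only
  constructor
  · intro i j hij hji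
    by_cases hij0 : i = j
    · subst hij0; rfl
    · have h1 : Commute (φs i.succ) (φs j.succ) := hφsφs _ _
      have h2 : Commute (φs i.succ) (φ j.castSucc) := by
        refine (hφφs_ne _ _ ?_).symm
        intro h; apply hij; simpa [Fin.ext_iff] using h.symm
      have h3 : Commute (φ i.castSucc) (φs j.succ) := by
        refine hφφs_ne _ _ ?_
        intro h; apply hji; simpa [Fin.ext_iff] using h.symm
      have h4 : Commute (φ i.castSucc) (φ j.castSucc) := hφφ _ _
      exact ((h1.mul_right h2).mul_left (h3.mul_right h4)).eq
  · intro i h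
    set i0 := i.castSucc with hi0
    set i1 := i.succ with hi1
    have hic : (⟨(i : ℕ) + 1, h⟩ : Fin n).castSucc = i1 := by
      simp [Fin.ext_iff, hi1]
    have p0 := φ i0
    set p0 := φ i0
    set p1 := φ i1
    set s1 := φs i1
    set s2 := φs (⟨(i : ℕ) + 1, h⟩ : Fin n).succ with hs2
    have h11 : p1 * s1 = 1 := hφφs_eq _
    have h01 : p0 * s1 = s1 * p0 := by
      refine hφφs_ne _ _ ?_; simp [hi0, hi1, Fin.ext_iff]
    have h02 : p0 * s2 = s2 * p0 := by
      refine hφφs_ne _ _ ?_; simp [hi0, hs2, Fin.ext_iff]; omega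
    have h12 : p1 * s2 = s2 * p1 := by
      refine hφφs_ne _ _ ?_; simp [hi1, hs2, Fin.ext_iff]
    have hpp : p0 * p1 = p1 * p0 := hφφ _ _
    have hss : s1 * s2 = s2 * s1 := hφsφs _ _
    rw [hic]
    constructor
    · calc s2 * p1 * (s1 * p0 * (s1 * p0))
          = s2 * (p1 * s1 * (p0 * s1) * p0) := by noncomm_ring
        _ = s2 * (1 * (s1 * p0) * p0) := by rw [h11, h01]
        _ = s2 * s1 * (p0 * p0) := by noncomm_ring
        _ = s1 * s2 * (p0 * p0) := by rw [hss]
        _ = s1 * (p0 * s2 * (p1 * s1) * p0) := by rw [h02, h11]; noncomm_ring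
        _ = s1 * p0 * (s2 * p1 * (s1 * p0)) := by noncomm_ring
    · calc s2 * p1 * (s2 * p1) * (s1 * p0)
          = s2 * (p1 * s2 * (p1 * s1) * p0) := by noncomm_ring
        _ = s2 * (s2 * p1 * 1 * p0) := by rw [h12, h11]
        _ = s2 * s2 * (p1 * p0) := by noncomm_ring
        _ = s2 * s2 * (p0 * p1) := by rw [hpp]
        _ = s2 * (p1 * s1 * (p0 * s2) * p1) := by rw [h11, h02]; noncomm_ring
        _ = s2 * p1 * (s1 * p0 * (s2 * p1)) := by noncomm_ring
end

section
/- For each partition σ = (σ_1,...,σ_{n-1}) fitting in an (n-1)×k box, the k-tuple x^σ with x^σ_j = z^{1/n} ζ^{|σ|/n} ζ^{I_j(σ^t)}, where ζ = exp(2πi/(k+n)) and I_j(σ^t) = (k+1)/2 + σ^t_{k+1-j} - (k+1-j), solves the Bethe ansatz equations x_1^{n+k} = ⋯ = x_k^{n+k} = z(-1)^{k-1} ∏_{i=1}^k x_i. -/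
/-!
Write `ζ^w = e^{2πi w/(k+n)}`. Each exponent `I_j` lies in `(k+1)/2 + ℤ`, so
`ζ^{(n+k) I_j} = e^{2πi I_j} = (-1)^{k+1}` does not depend on `j`; and `∑_j I_j = |σ^t| = |σ|`,
so `∏_i x_i = z^{k/n} ζ^{k|σ|/n + |σ|} = z^{k/n} ζ^{(n+k)|σ|/n}`, which is `x_j^{n+k}` up to the
factor `z (-1)^{k-1}`.
-/

open Finset Complex

noncomputable def rootOfUnityPow (N : ℕ) (w : ℚ) : ℂ :=
  exp (2 * Real.pi * I * w / N)

section rootOfUnityPow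

variable (N : ℕ)

theorem rootOfUnityPow_add (a b : ℚ) :
    rootOfUnityPow N (a + b) = rootOfUnityPow N a * rootOfUnityPow N b := by
  simp only [rootOfUnityPow, ← exp_add]
  congr 1
  push_cast
  ring

theorem rootOfUnityPow_sum {ι : Type*} (s : Finset ι) (f : ι → ℚ) :
    rootOfUnityPow N (∑ i ∈ s, f i) = ∏ i ∈ s, rootOfUnityPow N (f i) := by
  simp only [rootOfUnityPow, ← exp_sum]
  push_cast
  rw [Finset.mul_sum, Finset.sum_div]

theorem rootOfUnityPow_pow (a : ℚ) (m : ℕ) :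
    rootOfUnityPow N a ^ m = rootOfUnityPow N (m * a) := by
  rw [rootOfUnityPow, ← exp_nat_mul]
  congr 1
  push_cast
  ring

end rootOfUnityPow

theorem rootOfUnityPow_natCast_mul {N : ℕ} (hN : N ≠ 0) (a : ℚ) :
    rootOfUnityPow N (N * a) = exp (2 * Real.pi * I * a) := by
  rw [rootOfUnityPow]
  congr 1
  push_cast
  field_simp

theorem exp_two_pi_I_mul_half_add_intCast (k : ℕ) (m : ℤ) :
    exp (2 * Real.pi * I * (((k + 1 : ℚ) / 2 + m : ℚ) : ℂ)) = (-1) ^ (k + 1) := by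
  rw [show 2 * Real.pi * I * (((k + 1 : ℚ) / 2 + m : ℚ) : ℂ)
      = (k + 1 : ℕ) * (Real.pi * I) + m * (2 * Real.pi * I) by push_cast; ring,
    exp_add, exp_nat_mul, exp_pi_mul_I, exp_int_mul_two_pi_mul_I, mul_one]

def conjugateParts {ι : Type*} [Fintype ι] (k : ℕ) (σ : ι → ℕ) (j : Fin k) : ℕ :=
  #{i | (j : ℕ) < σ i}

theorem sum_conjugateParts {ι : Type*} [Fintype ι] {k : ℕ} {σ : ι → ℕ} (hσk : ∀ i, σ i ≤ k) :
    ∑ j, conjugateParts k σ j = ∑ i, σ i := by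
  simp only [conjugateParts, card_filter]
  rw [sum_comm]
  refine sum_congr rfl fun i _ => ?_
  rw [← card_filter, Fin.card_filter_val_lt, min_eq_right (hσk i)]

-- `I_{j+1}(t)` of the paper: `j` is 0-based, so `t_{k+1-(j+1)}` is `t j.rev`.
def betheExponent (k : ℕ) (t : Fin k → ℕ) (j : Fin k) : ℚ :=
  ((k : ℚ) + 1) / 2 + (t j.rev : ℚ) - ((k : ℚ) - (j : ℚ))

theorem betheExponent_eq_half_add_intCast (k : ℕ) (t : Fin k → ℕ) (j : Fin k) :
    betheExponent k t j = (k + 1 : ℚ) / 2 + ((t j.rev - k + j : ℤ) : ℚ) := by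
  rw [betheExponent]
  push_cast
  ring

theorem sum_betheExponent (k : ℕ) (t : Fin k → ℕ) :
    ∑ j, betheExponent k t j = ∑ j, (t j : ℚ) := by
  have hgauss : ∑ j : Fin k, (j : ℚ) = k * (k - 1) / 2 := by
    rw [Fin.sum_univ_eq_sum_range (fun j => (j : ℚ))]
    clear t
    induction k with
    | zero => simp
    | succ k ih => rw [sum_range_succ, ih]; push_cast; ring
  have hrev : ∑ j : Fin k, (t j.rev : ℚ) = ∑ j, (t j : ℚ) :=
    Equiv.sum_comp Fin.revPerm fun j => (t j : ℚ)
  simp only [betheExponent, sum_sub_distrib, sum_add_distrib, sum_const, card_univ,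
    Fintype.card_fin, nsmul_eq_mul, hgauss, hrev]
  ring

noncomputable def betheRoot (n k : ℕ) (zr : ℂ) (t : Fin k → ℕ) (j : Fin k) : ℂ :=
  zr * rootOfUnityPow (k + n) ((∑ i, t i : ℕ) / n) * rootOfUnityPow (k + n) (betheExponent k t j)

theorem prod_betheRoot {n k : ℕ} (hn : n ≠ 0) (zr : ℂ) (t : Fin k → ℕ) :
    ∏ i, betheRoot n k zr t i
      = zr ^ k * rootOfUnityPow (k + n) ((k + n : ℕ) * ((∑ i, t i : ℕ) / n)) := by
  have hexp : (k : ℚ) * ((∑ i, t i : ℕ) / n) + ∑ i, betheExponent k t i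
      = (k + n : ℕ) * ((∑ i, t i : ℕ) / n) := by
    rw [sum_betheExponent]
    push_cast
    field_simp
  rw [← hexp, rootOfUnityPow_add, ← rootOfUnityPow_pow, rootOfUnityPow_sum]
  simp only [betheRoot, prod_mul_distrib, prod_const, card_univ, Fintype.card_fin, mul_assoc]

theorem betheRoot_pow {n k : ℕ} (zr : ℂ) (t : Fin k → ℕ) (j : Fin k) :
    betheRoot n k zr t j ^ (n + k) = zr ^ (n + k)
      * rootOfUnityPow (k + n) ((k + n : ℕ) * ((∑ i, t i : ℕ) / n)) * (-1) ^ (k + 1) := by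
  have hN : k + n ≠ 0 := by have := j.pos; omega
  rw [betheRoot, mul_pow, mul_pow, rootOfUnityPow_pow, rootOfUnityPow_pow, add_comm n k,
    rootOfUnityPow_natCast_mul hN (betheExponent k t j), betheExponent_eq_half_add_intCast,
    exp_two_pi_I_mul_half_add_intCast]

theorem betheRoot_solves_BAE {n k : ℕ} (hn : n ≠ 0) {z zr : ℂ} (hzr : zr ^ n = z)
    (t : Fin k → ℕ) (j : Fin k) :
    betheRoot n k zr t j ^ (n + k) = z * (-1) ^ (k - 1) * ∏ i, betheRoot n k zr t i := by
  obtain ⟨k, rfl⟩ : ∃ m, k = m + 1 := ⟨k - 1, by have := j.pos; omega⟩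
  rw [betheRoot_pow, prod_betheRoot hn, pow_add, hzr, Nat.add_sub_cancel, pow_succ]
  ring

theorem bethe_roots_solve_BAE_general (n k : ℕ) (hn : 2 ≤ n)
    (z zr : ℂ) (hzr : zr ^ n = z)
    (σ : Fin (n - 1) → ℕ) (hσk : ∀ i, σ i ≤ k) :
    letI σt : Fin k → ℕ := fun j =>
      (Finset.univ.filter fun i : Fin (n - 1) => (j : ℕ) < σ i).card
    letI ζpow : ℚ → ℂ := fun w =>
      Complex.exp (2 * Real.pi * Complex.I * (w : ℂ) / ((k : ℂ) + (n : ℂ)))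
    letI Iexp : Fin k → ℚ := fun j =>
      ((k : ℚ) + 1) / 2 + (σt j.rev : ℚ) - ((k : ℚ) - (j : ℚ))
    letI x : Fin k → ℂ := fun j => zr * ζpow ((∑ i, σ i : ℕ) / (n : ℚ)) * ζpow (Iexp j)
    ∀ j : Fin k, x j ^ (n + k) = z * (-1) ^ (k - 1) * ∏ i, x i := by
  intro j
  have key := betheRoot_solves_BAE (by omega) hzr (conjugateParts k σ) j
  simp only [betheRoot, rootOfUnityPow, sum_conjugateParts hσk, Nat.cast_add] at key
  exact key

/-- For each partition `σ` in the `(n-1)×k` box, the `k`-tuple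
`x^σ_j = z^{1/n} ζ^{|σ|/n} ζ^{I_j(σ^t)}`, with `ζ = exp(2πi/(k+n))` and
`I_j(σ^t) = (k+1)/2 + σ^t_{k+1-j} - (k+1-j)` (where `σ^t` is the transpose
partition, `σ^t_j = #{i : σ_i ≥ j}`), solves the Bethe ansatz equations
`x_1^{n+k} = ⋯ = x_k^{n+k} = z(-1)^{k-1} ∏_i x_i`.
Here `zr` is a chosen `n`-th root of `z` and fractional powers of `ζ` are
`ζ^w := exp(2πi w/(k+n))`. -/
theorem bethe_roots_solve_BAE (n k : ℕ) (hn : 2 ≤ n) (hk : 1 ≤ k)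
    (z zr : ℂ) (hz : z ≠ 0) (hzr : zr ^ n = z)
    (σ : Fin (n - 1) → ℕ) (hσ : Antitone σ) (hσk : ∀ i, σ i ≤ k) :
    letI σt : Fin k → ℕ := fun j =>
      (Finset.univ.filter fun i : Fin (n - 1) => (j : ℕ) < σ i).card
    letI ζpow : ℚ → ℂ := fun w =>
      Complex.exp (2 * Real.pi * Complex.I * (w : ℂ) / ((k : ℂ) + (n : ℂ)))
    letI Iexp : Fin k → ℚ := fun j =>
      ((k : ℚ) + 1) / 2 + (σt j.rev : ℚ) - ((k : ℚ) - (j : ℚ))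
    letI x : Fin k → ℂ := fun j => zr * ζpow ((∑ i, σ i : ℕ) / (n : ℚ)) * ζpow (Iexp j)
    ∀ j : Fin k, x j ^ (n + k) = z * (-1) ^ (k - 1) * ∏ i, x i :=
  bethe_roots_solve_BAE_general n k hn z zr hzr σ hσk
end

section
/- In the polynomial ring ℂ[e_1,...,e_n], the ideal ⟨e_n - 1, h_{k+1}, ..., h_{n+k-1}⟩ equals the ideal generated by e_n - 1 together with all Schur polynomials s_{(k+1, λ_2, ..., λ_{n-1}, 0)} with k+1 ≥ λ_2 ≥ ⋯ ≥ λ_{n-1} ≥ 0. -/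
open MvPolynomial

/-- The generator `e_r` of `ℂ[e_1,…,e_n]`, realised as `MvPolynomial (Fin n) ℂ`
(`e_0 = 1`, `e_r = 0` for `r > n`). -/
noncomputable def eGen (n : ℕ) (r : ℕ) : MvPolynomial (Fin n) ℂ :=
  if h0 : r = 0 then 1 else if h : r ≤ n then X ⟨r - 1, by omega⟩ else 0

/-- `e_m` with integer index, vanishing for `m < 0`. -/
noncomputable def eGenZ (n : ℕ) (m : ℤ) : MvPolynomial (Fin n) ℂ :=
  if 0 ≤ m then eGen n m.toNat else 0

/-- The complete symmetric function `h_r = det(e_{1-i+j})_{1≤i,j≤r}` (Jacobi–Trudi). -/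
noncomputable def hGen (n : ℕ) (r : ℕ) : MvPolynomial (Fin n) ℂ :=
  (Matrix.of fun i j : Fin r => eGenZ n (1 + (j : ℤ) - (i : ℤ))).det

/-- `h_m` with integer index, vanishing for `m < 0`. -/
noncomputable def hGenZ (n : ℕ) (m : ℤ) : MvPolynomial (Fin n) ℂ :=
  if 0 ≤ m then hGen n m.toNat else 0

/-- The Schur polynomial of the partition `λ = (λ_1,…,λ_n)` via the Jacobi–Trudi
determinant `s_λ = det(h_{λ_i - i + j})_{1≤i,j≤n}`. -/
noncomputable def schurJT (n : ℕ) (lam : Fin n → ℕ) : MvPolynomial (Fin n) ℂ :=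
  (Matrix.of fun i j : Fin n => hGenZ n ((lam i : ℤ) - (i : ℤ) + (j : ℤ))).det

/-!
If `λ_1 = k + 1` and `λ_n = 0`, the last row of the Jacobi–Trudi matrix of `s_λ` is
`(0, …, 0, 1)`, and the remaining minor has first row `h_{k+1}, …, h_{k+n-1}`; so `s_λ` lies in
the first ideal. Conversely, modulo `⟨h_a, …, h_{a+m-1}⟩` the Jacobi–Trudi matrix of the hook
`(a, 1^m)` has first row `(0, …, 0, h_{a+m})` above a unitriangular block, so
`s_{(a,1^m)} ≡ (-1)^m h_{a+m}`; induction on `m` with `a = k + 1` recovers `h_{k+1+m}` from the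
hooks, which all satisfy the constraints on `λ`.
-/

theorem Matrix.det_mem_of_row_mem {R ι : Type*} [CommRing R] [Fintype ι] [DecidableEq ι]
    {I : Ideal R} (A : Matrix ι ι R) (i : ι) (h : ∀ j, A i j ∈ I) : A.det ∈ I := by
  rw [← Ideal.Quotient.eq_zero_iff_mem, RingHom.map_det]
  exact Matrix.det_eq_zero_of_row_eq_zero i fun j => Ideal.Quotient.eq_zero_iff_mem.mpr (h j)

section JacobiTrudi

variable {R : Type*} [CommRing R]

/-- The leading `s × s` block of `(h_{λ_i - i + j})` for the zero-padded partition `L`; indices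
start at `0`. -/
def jacobiTrudi (h : ℤ → R) (L : ℕ → ℕ) (s : ℕ) : Matrix (Fin s) (Fin s) R :=
  Matrix.of fun i j => h ((L i : ℤ) - i + j)

theorem det_jacobiTrudi_succ {h : ℤ → R} (h_zero : h 0 = 1) (h_neg : ∀ m < 0, h m = 0)
    {L : ℕ → ℕ} {s : ℕ} (hL : L s = 0) :
    (jacobiTrudi h L (s + 1)).det = (jacobiTrudi h L s).det := by
  rw [Matrix.det_succ_row _ (Fin.last s), Fin.sum_univ_castSucc]
  have hrow : ∀ j : Fin s, jacobiTrudi h L (s + 1) (Fin.last s) j.castSucc = 0 := fun j =>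
    h_neg _ (by simp [hL])
  rw [Finset.sum_eq_zero fun j _ => by rw [hrow j, mul_zero, zero_mul], zero_add]
  simp [jacobiTrudi, hL, h_zero, Fin.succAbove_last]
  rfl

theorem det_jacobiTrudi_eq_of_le {h : ℤ → R} (h_zero : h 0 = 1) (h_neg : ∀ m < 0, h m = 0)
    {L : ℕ → ℕ} {m s : ℕ} (hms : m ≤ s) (hL : ∀ t, m ≤ t → t < s → L t = 0) :
    (jacobiTrudi h L s).det = (jacobiTrudi h L m).det := by
  induction s, hms using Nat.le_induction with
  | base => rfl
  | succ s hms ih =>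
    rw [det_jacobiTrudi_succ h_zero h_neg (hL s hms s.lt_succ_self),
      ih fun t h₁ h₂ => hL t h₁ (by omega)]

theorem mk_det_jacobiTrudi_hook {h : ℤ → R} (h_zero : h 0 = 1) (h_neg : ∀ m < 0, h m = 0)
    {I : Ideal R} {L : ℕ → ℕ} {m : ℕ} (hL : ∀ i, 1 ≤ i → i ≤ m → L i = 1)
    (hI : ∀ j < m, h ((L 0 + j : ℕ) : ℤ) ∈ I) :
    Ideal.Quotient.mk I (jacobiTrudi h L (m + 1)).det =
      (-1) ^ m * Ideal.Quotient.mk I (h ((L 0 + m : ℕ) : ℤ)) := by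
  rw [RingHom.map_det, Matrix.det_succ_row_zero, Fin.sum_univ_castSucc, Finset.sum_eq_zero,
    zero_add]
  · have hminor : (((Ideal.Quotient.mk I).mapMatrix (jacobiTrudi h L (m + 1))).submatrix
        Fin.succ (Fin.last m).succAbove).det = 1 := by
      rw [Fin.succAbove_last, Matrix.det_of_isUpperTriangular]
      · simp [jacobiTrudi, hL, h_zero]
      · intro i j hij
        have hji : (j : ℕ) < i := hij
        simp [jacobiTrudi, hL (i + 1) (by omega) i.isLt, h_neg (-i + j) (by omega)]
    rw [hminor]
    simp [jacobiTrudi]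
  · intro j _
    have hj := Ideal.Quotient.eq_zero_iff_mem.mpr (hI j j.isLt)
    push_cast at hj
    simp [jacobiTrudi, hj]

end JacobiTrudi

theorem hGenZ_zero (n : ℕ) : hGenZ n 0 = 1 := by
  simp [hGenZ, hGen, Matrix.det_fin_zero]

theorem hGenZ_of_neg (n : ℕ) {m : ℤ} (hm : m < 0) : hGenZ n m = 0 := by
  simp [hGenZ, hm]

theorem hGenZ_natCast (n a : ℕ) : hGenZ n a = hGen n a := by
  simp [hGenZ]

theorem schurJT_eq_det_jacobiTrudi {n : ℕ} {lam : Fin n → ℕ} {L : ℕ → ℕ}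
    (hL : ∀ i : Fin n, lam i = L i) : schurJT n lam = (jacobiTrudi (hGenZ n) L n).det := by
  simp [schurJT, jacobiTrudi, hL]

theorem schurJT_mem_of_hGen_mem {n a : ℕ} (hn : 1 < n) {I : Ideal (MvPolynomial (Fin n) ℂ)}
    (hI : ∀ j < n - 1, hGen n (a + j) ∈ I) {lam : Fin n → ℕ} (h0 : lam ⟨0, by omega⟩ = a)
    (hlast : lam ⟨n - 1, by omega⟩ = 0) : schurJT n lam ∈ I := by
  set L : ℕ → ℕ := fun i => if hi : i < n then lam ⟨i, hi⟩ else 0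
  rw [schurJT_eq_det_jacobiTrudi (L := L) (fun i => by simp [L]),
    det_jacobiTrudi_eq_of_le (hGenZ_zero n) (fun _ => hGenZ_of_neg n) (m := n - 1) (by omega)
      fun t h₁ h₂ => by simp [L, show t = n - 1 by omega, hlast]]
  refine Matrix.det_mem_of_row_mem _ ⟨0, by omega⟩ fun j => ?_
  simpa [jacobiTrudi, L, show 0 < n by omega, h0, ← hGenZ_natCast] using hI j j.isLt

def hookShape (a m i : ℕ) : ℕ :=
  if i = 0 then a else if i ≤ m then 1 else 0

theorem hookShape_zero (a m : ℕ) : hookShape a m 0 = a := if_pos rfl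

theorem hookShape_of_pos_of_le (a : ℕ) {m i : ℕ} (h₁ : 1 ≤ i) (h₂ : i ≤ m) :
    hookShape a m i = 1 := by
  simp [hookShape, h₂, show i ≠ 0 by omega]

theorem hookShape_of_lt (a : ℕ) {m i : ℕ} (h : m < i) : hookShape a m i = 0 := by
  simp [hookShape, show i ≠ 0 by omega, show ¬i ≤ m by omega]

theorem hookShape_antitone {a : ℕ} (ha : 1 ≤ a) (m : ℕ) : Antitone (hookShape a m) := by
  intro i j hij
  simp only [hookShape]
  split_ifs <;> omega

theorem schurJT_hookShape {n m : ℕ} (a : ℕ) (hm : m < n) :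
    schurJT n (fun i => hookShape a m i) = (jacobiTrudi (hGenZ n) (hookShape a m) (m + 1)).det := by
  rw [schurJT_eq_det_jacobiTrudi fun _ => rfl,
    det_jacobiTrudi_eq_of_le (hGenZ_zero n) (fun _ => hGenZ_of_neg n) hm
      fun t ht _ => hookShape_of_lt a ht]

theorem hGen_mem_of_schurJT_mem {n a : ℕ} (hn : 1 < n) (ha : 1 ≤ a)
    {I : Ideal (MvPolynomial (Fin n) ℂ)}
    (hI : ∀ lam : Fin n → ℕ, Antitone lam → lam ⟨0, by omega⟩ = a →
      lam ⟨n - 1, by omega⟩ = 0 → schurJT n lam ∈ I) :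
    ∀ m < n - 1, hGen n (a + m) ∈ I := by
  intro m
  induction m using Nat.strong_induction_on with
  | _ m ih =>
    intro hm
    have hlower : ∀ j < m, hGenZ n ((hookShape a m 0 + j : ℕ) : ℤ) ∈ I := fun j hj => by
      rw [hookShape_zero, hGenZ_natCast]
      exact ih j hj (by omega)
    have hhook := mk_det_jacobiTrudi_hook (hGenZ_zero n) (fun _ => hGenZ_of_neg n)
      (fun _ => hookShape_of_pos_of_le a) hlower
    have hmem : schurJT n (fun i => hookShape a m i) ∈ I :=
      hI _ (fun _ _ hij => hookShape_antitone ha m hij) (hookShape_zero a m)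
        (hookShape_of_lt a hm)
    rw [← schurJT_hookShape a (by omega), Ideal.Quotient.eq_zero_iff_mem.mpr hmem,
      hookShape_zero, hGenZ_natCast, eq_comm] at hhook
    rw [← Ideal.Quotient.eq_zero_iff_mem]
    exact (isUnit_neg_one.pow m).mul_right_eq_zero.mp hhook

/-- In `ℂ[e_1,…,e_n]` the ideal `⟨e_n - 1, h_{k+1},…,h_{n+k-1}⟩` equals the ideal
generated by `e_n - 1` together with all Schur polynomials
`s_{(k+1, λ_2, …, λ_{n-1}, 0)}` with `k+1 ≥ λ_2 ≥ ⋯ ≥ λ_{n-1} ≥ 0`. -/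
theorem gepner_ideal_eq_goodman_wenzl_ideal (n k : ℕ) (hn : 2 ≤ n) :
    Ideal.span (insert (eGen n n - 1)
        {p | ∃ r : ℕ, k + 1 ≤ r ∧ r ≤ n + k - 1 ∧ p = hGen n r}) =
      Ideal.span (insert (eGen n n - 1)
        {p | ∃ lam : Fin n → ℕ, Antitone lam ∧ lam ⟨0, by omega⟩ = k + 1 ∧
          lam ⟨n - 1, by omega⟩ = 0 ∧ p = schurJT n lam}) := by
  apply le_antisymm <;> rw [Ideal.span_le] <;> rintro p (rfl | hp)
  · exact Ideal.subset_span (Set.mem_insert _ _)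
  · obtain ⟨r, hr₁, hr₂, rfl⟩ := hp
    obtain ⟨m, rfl⟩ : ∃ m, r = k + 1 + m := ⟨r - (k + 1), by omega⟩
    exact hGen_mem_of_schurJT_mem hn (Nat.le_add_left 1 k)
      (fun lam hlam h0 hlast => Ideal.subset_span (Or.inr ⟨lam, hlam, h0, hlast, rfl⟩)) m (by omega)
  · exact Ideal.subset_span (Set.mem_insert _ _)
  · obtain ⟨lam, -, h0, hlast, rfl⟩ := hp
    exact schurJT_mem_of_hGen_mem hn
      (fun j hj => Ideal.subset_span (Or.inr ⟨k + 1 + j, by omega, by omega, rfl⟩)) h0 hlast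
end

section
/- If commuting elements h_0 = 1, h_1, h_2, ... of a commutative ring satisfy the relations Σ_{a+b=r}(-1)^a e_a h_b = 0 for all r ≥ 1, where e_a := det(h_{1-i+j})_{1≤i,j≤a}, then conversely h_r = det(e_{1-i+j})_{1≤i,j≤r} for all r ≥ 1 (the dual Jacobi-Trudi relation). -/
/-!
Both `h` and the determinants `det (e_{1-i+j})_{i,j ≤ n}` satisfy the recursion
`x_{n+1} = ∑_{a ≤ n} (-1)^a e_{a+1} x_{n-a}` with `x_0 = 1`, hence they coincide. For `h` this is
the given relation solved for `h_{n+1}` (using `e_0 = 1`). For the determinants it is the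
expansion along the first row: the minor at column `a` is block triangular, with a unitriangular
block and the same Hessenberg–Toeplitz matrix of size `n - a`.
-/

open Finset Matrix

section HessenbergToeplitz

variable {R : Type*} [CommRing R]

def hessenbergToeplitz (c : ℤ → R) (n : ℕ) : Matrix (Fin n) (Fin n) R :=
  of fun i j => c (1 + j - i)

variable {c : ℤ → R}

theorem det_unitriangularToeplitz_eq_one (hneg : ∀ m < 0, c m = 0) (hzero : c 0 = 1) (m : ℕ) :
    (of fun k l : Fin m => c (l - k)).det = 1 := by
  rw [det_of_isUpperTriangular]
  · simp [hzero]
  · intro k l hlk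
    exact hneg _ (by simpa using hlk)

theorem det_hessenbergToeplitz_submatrix_succ_succAbove (hneg : ∀ m < 0, c m = 0)
    (hzero : c 0 = 1) {n : ℕ} (j : Fin (n + 1)) :
    ((hessenbergToeplitz c (n + 1)).submatrix Fin.succ j.succAbove).det =
      (hessenbergToeplitz c (n - j)).det := by
  obtain ⟨m, hm⟩ : ∃ m, n = j + m := ⟨n - j, by omega⟩
  have hval : ∀ l : Fin n, ((j.succAbove l : ℕ) : ℤ) =
      if (l : ℕ) < j then ((l : ℕ) : ℤ) else (l : ℕ) + 1 := by
    intro l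
    rcases lt_or_ge l.castSucc j with hl | hl
    · rw [Fin.succAbove_of_castSucc_lt _ _ hl, if_pos (by simpa [Fin.lt_def] using hl)]; rfl
    · rw [Fin.succAbove_of_le_castSucc _ _ hl, if_neg (by simpa [Fin.le_def] using hl)]; simp
  let σ : Fin j ⊕ Fin m ≃ Fin n := finSumFinEquiv.trans (finCongr hm.symm)
  have hblocks : ((hessenbergToeplitz c (n + 1)).submatrix Fin.succ j.succAbove).submatrix σ σ =
      fromBlocks (of fun k l : Fin j => c (l - k))
        (of fun (k : Fin j) (l : Fin m) => c (j + l + 1 - k)) 0 (hessenbergToeplitz c m) := by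
    ext (k | k) (l | l) <;> simp [σ, hessenbergToeplitz, hval]
    case inr.inl => exact hneg _ (by omega)
    all_goals congr 1; ring
  rw [← det_submatrix_equiv_self σ, hblocks, det_fromBlocks_zero₂₁,
    det_unitriangularToeplitz_eq_one hneg hzero, one_mul, show n - j = m by omega]

theorem det_hessenbergToeplitz_succ (hneg : ∀ m < 0, c m = 0) (hzero : c 0 = 1) (n : ℕ) :
    (hessenbergToeplitz c (n + 1)).det =
      ∑ a ∈ range (n + 1), (-1) ^ a * c (a + 1) * (hessenbergToeplitz c (n - a)).det := by
  rw [det_succ_row_zero, ← Fin.sum_univ_eq_sum_range]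
  refine sum_congr rfl fun j _ => ?_
  rw [det_hessenbergToeplitz_submatrix_succ_succAbove hneg hzero]
  simp [hessenbergToeplitz, add_comm]

end HessenbergToeplitz

theorem eq_of_forall_succ_eq_sum_mul {S : Type*} [Semiring S] {f₁ f₂ : ℕ → S} (g : ℕ → S)
    (h0 : f₁ 0 = f₂ 0) (h₁ : ∀ n, f₁ (n + 1) = ∑ a ∈ range (n + 1), g a * f₁ (n - a))
    (h₂ : ∀ n, f₂ (n + 1) = ∑ a ∈ range (n + 1), g a * f₂ (n - a)) : f₁ = f₂ := by
  funext n
  induction n using Nat.strong_induction_on with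
  | _ n ih =>
    cases n with
    | zero => exact h0
    | succ n => rw [h₁, h₂]; exact sum_congr rfl fun a _ => by rw [ih (n - a) (by omega)]

theorem succ_eq_sum_of_alternating_sum_eq_zero {R : Type*} [CommRing R] {e h : ℕ → R}
    (e0 : e 0 = 1) {n : ℕ}
    (hrel : ∑ a ∈ range (n + 1 + 1), (-1) ^ a * e a * h (n + 1 - a) = 0) :
    h (n + 1) = ∑ a ∈ range (n + 1), (-1) ^ a * e (a + 1) * h (n - a) := by
  simp only [sum_range_succ' _ (n + 1), e0, pow_succ, Nat.add_sub_add_right, mul_neg_one, neg_mul,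
    sum_neg_distrib] at hrel
  linear_combination hrel

theorem dual_jacobi_trudi_general {R : Type*} [CommRing R] (h : ℕ → R) (h0 : h 0 = 1)
    (hZ : ℤ → R)
    (e : ℕ → R)
    (he : ∀ a : ℕ, e a = (Matrix.of fun i j : Fin a => hZ (1 + (j : ℤ) - (i : ℤ))).det)
    (eZ : ℤ → R) (heZ : ∀ m : ℤ, eZ m = if 0 ≤ m then e m.toNat else 0)
    (hrel : ∀ r : ℕ, 1 ≤ r →
      ∑ a ∈ Finset.range (r + 1), (-1 : R) ^ a * e a * h (r - a) = 0) :
    ∀ r : ℕ, 1 ≤ r →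
      h r = (Matrix.of fun i j : Fin r => eZ (1 + (j : ℤ) - (i : ℤ))).det := by
  have e0 : e 0 = 1 := by rw [he 0, det_fin_zero]
  have heZ_neg : ∀ m < 0, eZ m = 0 := fun m hm => by rw [heZ, if_neg (not_le.2 hm)]
  have heZ_zero : eZ 0 = 1 := by rw [heZ, if_pos le_rfl, Int.toNat_zero, e0]
  have heZ_succ : ∀ a : ℕ, eZ (a + 1) = e (a + 1) := fun a => by
    rw [heZ, if_pos (by omega)]; rfl
  have hdet : h = fun n => (hessenbergToeplitz eZ n).det :=
    eq_of_forall_succ_eq_sum_mul (fun a => (-1) ^ a * e (a + 1)) (by rw [h0, det_fin_zero])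
      (fun n => succ_eq_sum_of_alternating_sum_eq_zero e0 (hrel (n + 1) (by omega)))
      (fun n => by simp only [det_hessenbergToeplitz_succ heZ_neg heZ_zero, heZ_succ])
  intro r _
  exact congrFun hdet r

/-- Dual Jacobi–Trudi relation: if elements `h_0 = 1, h_1, h_2, …` of a commutative
ring satisfy `Σ_{a+b=r}(-1)^a e_a h_b = 0` for all `r ≥ 1`, where
`e_a := det(h_{1-i+j})_{1≤i,j≤a}` (with `h_m = 0` for `m < 0`), then
`h_r = det(e_{1-i+j})_{1≤i,j≤r}` for all `r ≥ 1` (with `e_m = 0` for `m < 0`). -/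
theorem dual_jacobi_trudi {R : Type*} [CommRing R] (h : ℕ → R) (h0 : h 0 = 1)
    (hZ : ℤ → R) (hhZ : ∀ m : ℤ, hZ m = if 0 ≤ m then h m.toNat else 0)
    (e : ℕ → R)
    (he : ∀ a : ℕ, e a = (Matrix.of fun i j : Fin a => hZ (1 + (j : ℤ) - (i : ℤ))).det)
    (eZ : ℤ → R) (heZ : ∀ m : ℤ, eZ m = if 0 ≤ m then e m.toNat else 0)
    (hrel : ∀ r : ℕ, 1 ≤ r →
      ∑ a ∈ Finset.range (r + 1), (-1 : R) ^ a * e a * h (r - a) = 0) :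
    ∀ r : ℕ, 1 ≤ r →
      h r = (Matrix.of fun i j : Fin r => eZ (1 + (j : ℤ) - (i : ℤ))).det :=
  dual_jacobi_trudi_general h h0 hZ e he eZ heZ hrel
end

section
/- For a symmetric polynomial expressed via the antisymmetrization formula, and variables (x_1,...,x_k) satisfying the Bethe ansatz equations x_i^{n+k} = z(-1)^{k-1} x_1⋯x_k with all x_i distinct and nonzero, the Schur polynomial satisfies the straightening relation s_λ(x_1,...,x_k) = z · s_{(λ_2, λ_3, ..., λ_k, λ_1 - n)}(x_1,...,x_k) for any partition λ with at most k parts and λ_1 ≥ n, where s_μ for a non-partition integer sequence μ is defined by the ratio of alternants det(x_j^{μ_i + k - i})/det(x_j^{k-i}). -/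
/-- The generalized Schur function `s_α(x) = det(x_j^{α_i+k-i})/det(x_j^{k-i})`
for an integer vector `α ∈ ℤ^k` (0-indexed exponents `α_i + (k-1-i)`). -/
noncomputable def genSchur (k : ℕ) (α : Fin k → ℤ) (x : Fin k → ℂ) : ℂ :=
  (Matrix.of fun i j : Fin k => x j ^ (α i + ((k : ℤ) - 1 - (i : ℤ)))).det /
    (Matrix.of fun i j : Fin k => x j ^ ((k : ℤ) - 1 - (i : ℤ))).det

/-- Straightening relation from the Bethe ansatz equations: if `x_1,…,x_k` are
distinct, nonzero and satisfy `x_i^{n+k} = z(-1)^{k-1} x_1⋯x_k`, then for any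
partition `λ` with at most `k` parts and `λ_1 ≥ n`,
`s_λ(x) = z · s_{(λ_2,…,λ_k,λ_1-n)}(x)`. -/
theorem schur_straightening_BAE (n k : ℕ) (hn : 2 ≤ n) (hk : 1 ≤ k)
    (z : ℂ) (hz : z ≠ 0) (x : Fin k → ℂ)
    (hxinj : Function.Injective x) (hx0 : ∀ i, x i ≠ 0)
    (hBAE : ∀ i : Fin k, x i ^ (n + k) = z * (-1) ^ (k - 1) * ∏ j, x j)
    (lam : Fin k → ℕ) (hlam : Antitone lam) (hlam1 : n ≤ lam ⟨0, by omega⟩) :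
    genSchur k (fun i => (lam i : ℤ)) x =
      z * genSchur k (fun i =>
        if h : (i : ℕ) + 1 < k then (lam ⟨(i : ℕ) + 1, h⟩ : ℤ)
        else (lam ⟨0, by omega⟩ : ℤ) - (n : ℤ)) x := by
  obtain ⟨m, rfl⟩ : ∃ m, k = m + 1 := ⟨k - 1, by omega⟩
  set P : ℂ := ∏ j, x j with hP
  set c : ℂ := z * (-1) ^ m * P with hc
  set β : Fin (m+1) → ℤ := fun i =>
    if i = 0 then (lam 0 : ℤ) - n - 1 else (lam i : ℤ) + (((m:ℤ)+1) - 1 - (i : ℤ)) with hβ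
  set N : Matrix (Fin (m+1)) (Fin (m+1)) ℂ := Matrix.of fun i j => x j ^ β i with hN
  have h00 : (⟨0, by omega⟩ : Fin (m+1)) = 0 := rfl
  -- LHS numerator
  have hL : (Matrix.of fun i j : Fin (m+1) =>
      x j ^ ((fun i => (lam i : ℤ)) i + (((m+1 : ℕ) : ℤ) - 1 - (i : ℤ)))).det = c * N.det := by
    have hrow : (Matrix.of fun i j : Fin (m+1) =>
        x j ^ ((fun i => (lam i : ℤ)) i + (((m+1 : ℕ) : ℤ) - 1 - (i : ℤ))))
        = N.updateRow 0 (c • N 0) := by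
      ext i j
      by_cases hi : i = 0
      · subst hi
        have hb : x j ^ ((n + (m+1) : ℕ) : ℤ) = c := by
          rw [zpow_natCast, hBAE j]
          norm_num [hc, hP]
        have hexp : ((lam (0 : Fin (m+1)) : ℤ) + (((m+1 : ℕ) : ℤ) - 1 - ((0 : Fin (m+1)) : ℤ)))
            = ((lam 0 : ℤ) - n - 1) + ((n + (m+1) : ℕ) : ℤ) := by
          have h0 : ((0 : Fin (m+1)) : ℤ) = 0 := by simp
          rw [h0]; push_cast; ring
        have hN0 : N 0 j = x j ^ ((lam 0 : ℤ) - n - 1) := by simp [hN, hβ]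
        simp only [Matrix.of_apply, Matrix.updateRow_self, Pi.smul_apply, smul_eq_mul]
        rw [hexp, zpow_add₀ (hx0 j), hb, hN0, mul_comm]
      · rw [Matrix.updateRow_ne hi]
        simp only [Matrix.of_apply, hN, hβ, hi, if_false]
        norm_num
    rw [hrow, Matrix.det_updateRow_smul, Matrix.updateRow_eq_self]
  -- RHS numerator
  set σ : Equiv.Perm (Fin (m+1)) := finRotate (m+1) with hσ
  have hR : (Matrix.of fun i j : Fin (m+1) =>
      x j ^ ((fun i => if h : (i : ℕ) + 1 < m + 1 then (lam ⟨(i : ℕ) + 1, h⟩ : ℤ)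
        else (lam ⟨0, by omega⟩ : ℤ) - (n : ℤ)) i + (((m+1 : ℕ) : ℤ) - 1 - (i : ℤ)))).det
      = ((-1 : ℂ) ^ m * N.det) * P := by
    have hrow : (Matrix.of fun i j : Fin (m+1) =>
        x j ^ ((fun i => if h : (i : ℕ) + 1 < m + 1 then (lam ⟨(i : ℕ) + 1, h⟩ : ℤ)
          else (lam ⟨0, by omega⟩ : ℤ) - (n : ℤ)) i + (((m+1 : ℕ) : ℤ) - 1 - (i : ℤ))))
        = (Matrix.of fun i j => N (σ i) j) * Matrix.diagonal x := by
      ext i j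
      rw [Matrix.mul_diagonal]
      simp only [Matrix.of_apply, hσ, finRotate_succ_apply]
      by_cases h : (i : ℕ) + 1 < m + 1
      · have hval : ((i + 1 : Fin (m+1)) : ℕ) = (i : ℕ) + 1 := by
          rw [Fin.val_add_one]
          have hne' : i ≠ Fin.last m := by
            intro hle; rw [hle] at h; simp [Fin.last] at h
          simp [hne']
        have hne : (i + 1 : Fin (m+1)) ≠ 0 := by
          intro h0; have := congrArg Fin.val h0; rw [hval] at this; simp at this
        have hNval : N (i + 1) j = x j ^ ((lam ⟨(i:ℕ)+1, h⟩ : ℤ) + ((m:ℤ) - 1 - (i:ℤ))) := by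
          have hfin : (i + 1 : Fin (m+1)) = ⟨(i : ℕ) + 1, h⟩ := by ext; exact hval
          rw [hN]
          simp only [Matrix.of_apply, hβ]
          rw [if_neg hne, hfin]
          congr 1
          simp only [Fin.val_mk]; push_cast; ring
        rw [hNval, dif_pos h, ← zpow_add_one₀ (hx0 j)]
        congr 1
        push_cast; ring
      · have him : (i : ℕ) = m := by omega
        have h10 : (i + 1 : Fin (m+1)) = 0 := by
          have hlast : i = Fin.last m := by ext; exact him
          rw [hlast]; ext; rw [Fin.val_add_one]; simp
        have hNval : N (i + 1) j = x j ^ ((lam 0 : ℤ) - n - 1) := by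
          rw [hN, h10]; simp [hβ]
        rw [hNval, dif_neg h, ← zpow_add_one₀ (hx0 j)]
        congr 1
        push_cast [him, h00]
        ring
    rw [hrow, Matrix.det_mul, Matrix.det_diagonal]
    have hperm : (Matrix.of fun i j => N (σ i) j).det = ((-1 : ℂ) ^ m) * N.det := by
      have h1 : (Matrix.of fun i j => N (σ i) j) = N.submatrix σ id := rfl
      rw [h1, Matrix.det_permute, hσ, sign_finRotate]
      push_cast
      ring
    rw [hperm, hP]
  unfold genSchur
  rw [hL, hR, mul_div_assoc, ← mul_div_assoc]
  congr 1
  rw [hc]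
  ring
end
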